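/- Let d ≥ 1 and β > β_d, where β_d = 1/I(0) (with β_d = 0 for d = 1, 2), let λ₀ > 0 be the unique solution of I(λ₀) = 1/β, and let ψ_β(x) = β (2π)^{−d} ∫_{[−π,π]^d} cos⟨φ,x⟩/(λ₀ + Φ(φ)) dφ. Then for every k ∈ ℕ the k-th moment ∑_{x ∈ ℤ^d} ‖x‖^k ψ_β(x)² is finite; that is, the probability measure π_β on ℤ^d with weights ψ_β(x)²/‖ψ_β‖²_{ℓ²} has finite moments of all orders. -/

import Mathlib

open MeasureTheory Real Filter
open scoped ENNReal

noncomputable section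

/-- The Fourier symbol `Φ(φ) = 2 ∑_j (1 - cos φ_j)` of the negative discrete Laplacian on `ℤ^d`. -/
def Phi (d : ℕ) (φ : Fin d → ℝ) : ℝ := 2 * ∑ j, (1 - Real.cos (φ j))

/-- The cube `[-π, π]^d`. -/
def cube (d : ℕ) : Set (Fin d → ℝ) := Set.univ.pi fun _ => Set.Icc (-π) π

/-- `I(λ) = (2π)^{-d} ∫_{[-π,π]^d} (λ + Φ(φ))⁻¹ dφ` (Bochner integral, real-valued). -/
def Ir (d : ℕ) (lam : ℝ) : ℝ := ((2 * π) ^ d)⁻¹ * ∫ φ in cube d, (lam + Phi d φ)⁻¹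

/-- The lattice `ℤ^d`. -/
abbrev Zd (d : ℕ) := Fin d → ℤ

/-- The Hilbert space `ℓ²(ℤ^d)` of real square-summable sequences. -/
abbrev l2 (d : ℕ) := lp (fun _ : Zd d => ℝ) 2

/-- The indicator `δ_x ∈ ℓ²(ℤ^d)` of the point `x`. -/
def delta (d : ℕ) (x : Zd d) : l2 d := lp.single 2 x 1

/-- The pointwise action of `H_β = Δ + β δ₀`:
`(H_β f)(x) = ∑_{y : |y-x|=1} (f y - f x) + β·1_{x=0}·f x`, where the sum over the `2d`
nearest neighbours is written out explicitly. -/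
def Hform (d : ℕ) (β : ℝ) (f : Zd d → ℝ) (x : Zd d) : ℝ :=
  (∑ i : Fin d, (f (Function.update x i (x i + 1)) + f (Function.update x i (x i - 1))))
    - 2 * d * f x + β * (if x = 0 then f x else 0)

/-- `H` is the bounded operator `H_β` on `ℓ²(ℤ^d)`. -/
def IsHamiltonian (d : ℕ) (β : ℝ) (H : l2 d →L[ℝ] l2 d) : Prop :=
  ∀ (f : l2 d) (x : Zd d), H f x = Hform d β (⇑f) x

/-- Heat kernel `p_β(t,x,y) = ⟨exp(t H_β) δ_y, δ_x⟩`. -/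
def heatKernel (d : ℕ) (H : l2 d →L[ℝ] l2 d) (t : ℝ) (x y : Zd d) : ℝ :=
  inner ℝ (NormedSpace.exp (t • H) (delta d y)) (delta d x)

/-- The candidate eigenfunction: `ψ(x) = β (2π)^{-d} ∫_{[-π,π]^d} cos⟨φ,x⟩/(λ₀ + Φ(φ)) dφ`. -/
def psiFun (d : ℕ) (β lam0 : ℝ) (x : Zd d) : ℝ :=
  β * (((2 * π) ^ d)⁻¹ *
    ∫ φ in cube d, Real.cos (∑ i, φ i * (x i : ℝ)) / (lam0 + Phi d φ))

/-- `I(λ)` as an extended-nonnegative-real (so that `I(0) = ∞` for `d = 1, 2` makes sense). -/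
def IE (d : ℕ) (lam : ℝ) : ℝ≥0∞ :=
  (∫⁻ φ in cube d, ENNReal.ofReal ((lam + Phi d φ)⁻¹)) / ENNReal.ofReal ((2 * π) ^ d)

/-- The Euclidean norm of a lattice point. -/
def latNorm (d : ℕ) (x : Zd d) : ℝ := Real.sqrt (∑ i, ((x i : ℝ)) ^ 2)

/-!
Off the origin `ψ` solves the resolvent equation `∑_{y ∼ x} ψ(y) = (2d + λ₀) ψ(x)`: in Fourier
variables the neighbour sum multiplies by `2 ∑_j cos φ_j = 2d - Φ(φ)`, and
`(2d - Φ)/(λ₀ + Φ) = (2d + λ₀)/(λ₀ + Φ) - 1`, where the constant `1` only contributes at `x = 0`.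
Since `|ψ| ≤ |β|/λ₀`, induction on `|x|₁` through this equation gives
`|ψ(x)| ≤ (|β|/λ₀) r^{|x|₁}` with `r = 2d/(2d + λ₀) < 1`, and exponential decay beats every
polynomial weight.
-/

lemma isCompact_cube (d : ℕ) : IsCompact (cube d) :=
  isCompact_univ_pi fun _ => isCompact_Icc

lemma integrableOn_cube {d : ℕ} {E : Type*} [NormedAddCommGroup E]
    {f : (Fin d → ℝ) → E} (hf : Continuous f) : IntegrableOn f (cube d) :=
  hf.continuousOn.integrableOn_compact (isCompact_cube d)

lemma measureReal_cube (d : ℕ) : volume.real (cube d) = (2 * π) ^ d := by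
  rw [measureReal_def, cube, volume_pi_pi]
  simp [Real.volume_Icc, two_mul, pi_pos.le]

lemma integral_Icc_exp_int_mul_I_eq_zero {n : ℤ} (hn : n ≠ 0) :
    ∫ t in Set.Icc (-π) π, Complex.exp (↑(t * n) * Complex.I) = 0 := by
  have hc : (n : ℂ) * Complex.I ≠ 0 := mul_ne_zero (Int.cast_ne_zero.mpr hn) Complex.I_ne_zero
  simp_rw [show ∀ t : ℝ, (↑(t * n) : ℂ) * Complex.I = (n * Complex.I) * t from
    fun t => by push_cast; ring]
  rw [integral_Icc_eq_integral_Ioc, ← intervalIntegral.integral_of_le (by linarith [pi_pos]),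
    integral_exp_mul_complex hc]
  have hperiod : Complex.exp (n * Complex.I * π) = Complex.exp (n * Complex.I * ↑(-π)) := by
    rw [Complex.exp_eq_exp_iff_exists_int]
    exact ⟨n, by push_cast; ring⟩
  rw [hperiod, sub_self, zero_div]

lemma integral_cube_cos_eq_zero {d : ℕ} {x : Zd d} (hx : x ≠ 0) :
    ∫ φ in cube d, Real.cos (∑ i, φ i * (x i : ℝ)) = 0 := by
  obtain ⟨i₀, hi₀⟩ : ∃ i, x i ≠ 0 := Function.ne_iff.mp hx
  have hexp : ∫ φ in cube d, Complex.exp (↑(∑ i, φ i * (x i : ℝ)) * Complex.I) = 0 :=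
    calc ∫ φ in cube d, Complex.exp (↑(∑ i, φ i * (x i : ℝ)) * Complex.I)
        = ∫ φ in cube d, ∏ i, Complex.exp (↑(φ i * (x i : ℝ)) * Complex.I) := by
          simp_rw [← Complex.exp_sum, ← Finset.sum_mul, Complex.ofReal_sum]
      _ = ∏ i, ∫ t in Set.Icc (-π) π, Complex.exp (↑(t * (x i : ℝ)) * Complex.I) := by
          rw [cube, volume_pi, Measure.restrict_pi_pi]
          exact integral_fintype_prod_eq_prod (μ := fun _ => volume.restrict (Set.Icc (-π) π))
            fun i t => Complex.exp (↑(t * (x i : ℝ)) * Complex.I)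
      _ = 0 := Finset.prod_eq_zero (Finset.mem_univ i₀) (integral_Icc_exp_int_mul_I_eq_zero hi₀)
  have hre := integral_re (integrableOn_cube (d := d) (f := fun φ =>
    Complex.exp (↑(∑ i, φ i * (x i : ℝ)) * Complex.I)) (by fun_prop))
  simpa only [RCLike.re_to_complex, Complex.exp_ofReal_mul_I_re, hexp, Complex.zero_re] using hre

lemma Phi_nonneg (d : ℕ) (φ : Fin d → ℝ) : 0 ≤ Phi d φ :=
  mul_nonneg zero_le_two (Finset.sum_nonneg fun j _ => sub_nonneg.mpr (cos_le_one (φ j)))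

lemma continuous_Phi (d : ℕ) : Continuous (Phi d) := by
  unfold Phi
  fun_prop

lemma two_mul_sum_cos_eq (d : ℕ) (φ : Fin d → ℝ) :
    2 * ∑ j, Real.cos (φ j) = 2 * d - Phi d φ := by
  simp only [Phi, Finset.sum_sub_distrib, Finset.sum_const, Finset.card_univ, Fintype.card_fin,
    nsmul_eq_mul, mul_one]
  ring

def neighbourSum {d : ℕ} (f : Zd d → ℝ) (x : Zd d) : ℝ :=
  ∑ i, (f (Function.update x i (x i + 1)) + f (Function.update x i (x i - 1)))

lemma neighbourSum_const_mul {d : ℕ} (c : ℝ) (f : Zd d → ℝ) (x : Zd d) :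
    neighbourSum (fun y => c * f y) x = c * neighbourSum f x := by
  simp only [neighbourSum, Finset.mul_sum, mul_add]

lemma abs_neighbourSum_le {d : ℕ} {f : Zd d → ℝ} {x : Zd d} {M : ℝ}
    (hM : ∀ i (a : ℤ), a.natAbs = 1 → |f (Function.update x i (x i + a))| ≤ M) :
    |neighbourSum f x| ≤ 2 * d * M := by
  calc |neighbourSum f x|
      ≤ ∑ i, (|f (Function.update x i (x i + 1))| + |f (Function.update x i (x i - 1))|) :=
        (Finset.abs_sum_le_sum_abs _ _).trans (Finset.sum_le_sum fun i _ => abs_add_le _ _)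
    _ ≤ ∑ _i : Fin d, (M + M) := by
        gcongr with i
        · exact hM i 1 rfl
        · rw [Int.sub_eq_add_neg]
          exact hM i (-1) rfl
    _ = 2 * d * M := by
        simp only [Finset.sum_const, Finset.card_univ, Fintype.card_fin, nsmul_eq_mul]
        ring

def cosTransform {d : ℕ} (g : (Fin d → ℝ) → ℝ) (x : Zd d) : ℝ :=
  ∫ φ in cube d, Real.cos (∑ i, φ i * (x i : ℝ)) * g φ

lemma sum_mul_update_add {d : ℕ} (φ : Fin d → ℝ) (x : Zd d) (i : Fin d) (a : ℤ) :
    ∑ j, φ j * (Function.update x i (x i + a) j : ℝ)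
      = ∑ j, φ j * (x j : ℝ) + φ i * a := by
  have h : ∀ j, φ j * (Function.update x i (x i + a) j : ℝ)
      = φ j * x j + if j = i then φ i * a else 0 := by
    intro j
    rcases eq_or_ne j i with rfl | hj
    · simp [mul_add]
    · simp [hj]
  simp [h, Finset.sum_add_distrib]

lemma neighbourSum_cosTransform {d : ℕ} {g : (Fin d → ℝ) → ℝ} (hg : Continuous g)
    (x : Zd d) :
    neighbourSum (cosTransform g) x = cosTransform (fun φ => (2 * d - Phi d φ) * g φ) x := by
  have hint : ∀ y : Zd d,
      IntegrableOn (fun φ => Real.cos (∑ i, φ i * (y i : ℝ)) * g φ) (cube d) :=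
    fun y => integrableOn_cube (by fun_prop)
  simp only [neighbourSum, cosTransform]
  simp_rw [← integral_add (hint _) (hint _)]
  rw [← integral_finsetSum]
  swap
  · exact fun i _ => (hint _).add (hint _)
  refine integral_congr_ae (ae_of_all _ fun φ => ?_)
  simp only [Int.sub_eq_add_neg, sum_mul_update_add]
  simp only [Int.cast_one, mul_one, Int.cast_neg, mul_neg, ← sub_eq_add_neg,
    ← two_mul_sum_cos_eq, cos_add, cos_sub, Finset.mul_sum, Finset.sum_mul]
  refine Finset.sum_congr rfl fun i _ => ?_
  ring

lemma abs_cosTransform_le {d : ℕ} {g : (Fin d → ℝ) → ℝ} {C : ℝ} (hg : ∀ φ, |g φ| ≤ C)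
    (x : Zd d) : |cosTransform g x| ≤ C * (2 * π) ^ d := by
  rw [← measureReal_cube, ← Real.norm_eq_abs, cosTransform]
  refine norm_setIntegral_le_of_norm_le_const (isCompact_cube d).measure_lt_top
    fun φ _ => ?_
  rw [norm_mul, ← one_mul C]
  exact mul_le_mul (abs_cos_le_one _) (hg φ) (norm_nonneg _) zero_le_one

lemma neighbourSum_cosTransform_resolvent {d : ℕ} {lam : ℝ} (hlam : 0 < lam) {x : Zd d}
    (hx : x ≠ 0) :
    neighbourSum (cosTransform fun φ => (lam + Phi d φ)⁻¹) x
      = (2 * d + lam) * cosTransform (fun φ => (lam + Phi d φ)⁻¹) x := by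
  have hpos : ∀ φ, 0 < lam + Phi d φ := fun φ => by linarith [Phi_nonneg d φ]
  have hcont : Continuous fun φ => (lam + Phi d φ)⁻¹ :=
    (continuous_const.add (continuous_Phi d)).inv₀ fun φ => (hpos φ).ne'
  have hsplit : ∀ φ, (2 * d - Phi d φ) * (lam + Phi d φ)⁻¹
      = (2 * d + lam) * (lam + Phi d φ)⁻¹ - 1 :=
    fun φ => by field_simp [(hpos φ).ne']; ring
  rw [neighbourSum_cosTransform hcont, cosTransform, cosTransform]
  simp_rw [hsplit, mul_sub, mul_one, mul_left_comm _ (2 * (d : ℝ) + lam)]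
  rw [integral_sub ((integrableOn_cube (E := ℝ) (by fun_prop)).const_mul _)
    (integrableOn_cube (E := ℝ) (by fun_prop)), integral_const_mul,
    integral_cube_cos_eq_zero hx, sub_zero]

lemma psiFun_eq_mul_cosTransform (d : ℕ) (β lam0 : ℝ) :
    psiFun d β lam0
      = fun x => β * ((2 * π) ^ d)⁻¹ * cosTransform (fun φ => (lam0 + Phi d φ)⁻¹) x := by
  funext x
  simp only [psiFun, cosTransform, div_eq_mul_inv, mul_assoc]

lemma neighbourSum_psiFun {d : ℕ} (β : ℝ) {lam0 : ℝ} (hlam0 : 0 < lam0) {x : Zd d}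
    (hx : x ≠ 0) : neighbourSum (psiFun d β lam0) x = (2 * d + lam0) * psiFun d β lam0 x := by
  rw [psiFun_eq_mul_cosTransform, neighbourSum_const_mul,
    neighbourSum_cosTransform_resolvent hlam0 hx]
  ring

lemma abs_psiFun_le {d : ℕ} (β : ℝ) {lam0 : ℝ} (hlam0 : 0 < lam0) (x : Zd d) :
    |psiFun d β lam0 x| ≤ |β| / lam0 := by
  have hg : ∀ φ, |(lam0 + Phi d φ)⁻¹| ≤ lam0⁻¹ := fun φ => by
    rw [abs_inv, abs_of_pos (by linarith [Phi_nonneg d φ])]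
    exact inv_anti₀ hlam0 (le_add_of_nonneg_right (Phi_nonneg d φ))
  rw [psiFun_eq_mul_cosTransform, abs_mul, abs_mul, abs_inv,
    abs_of_pos (by positivity : (0 : ℝ) < (2 * π) ^ d)]
  calc |β| * ((2 * π) ^ d)⁻¹ * |cosTransform (fun φ => (lam0 + Phi d φ)⁻¹) x|
      ≤ |β| * ((2 * π) ^ d)⁻¹ * (lam0⁻¹ * (2 * π) ^ d) := by
        gcongr
        exact abs_cosTransform_le hg x
    _ = |β| / lam0 := by field_simp

def l1Norm {d : ℕ} (x : Zd d) : ℕ := ∑ i, (x i).natAbs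

lemma l1Norm_le_l1Norm_update_add {d : ℕ} (x : Zd d) (i : Fin d) (a : ℤ) :
    l1Norm x ≤ l1Norm (Function.update x i (x i + a)) + a.natAbs := by
  have hi : (x i).natAbs ≤ (x i + a).natAbs + a.natAbs := by omega
  have hupd : (fun j => (Function.update x i (x i + a) j).natAbs)
      = Function.update (fun j => (x j).natAbs) i (x i + a).natAbs := by
    funext j
    exact Function.apply_update (fun _ => Int.natAbs) x i (x i + a) j
  simp only [l1Norm, hupd, Finset.sum_update_of_mem (Finset.mem_univ i),
    ← Finset.add_sum_erase _ _ (Finset.mem_univ i), Finset.sdiff_singleton_eq_erase]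
  omega

lemma latNorm_le_l1Norm {d : ℕ} (x : Zd d) : latNorm d x ≤ l1Norm x := by
  have hcast : (l1Norm x : ℝ) = ∑ i, |(x i : ℝ)| := by
    simp [l1Norm, Nat.cast_natAbs, Int.cast_abs]
  rw [latNorm, sqrt_le_iff, hcast]
  refine ⟨by positivity, ?_⟩
  simpa only [sq_abs] using Finset.sum_sq_le_sq_sum_of_nonneg fun i _ => abs_nonneg (x i : ℝ)

lemma abs_le_mul_pow_l1Norm {d : ℕ} {f : Zd d → ℝ} {B lam : ℝ} (hlam : 0 < lam)
    (hB : ∀ x, |f x| ≤ B) (hf : ∀ x, x ≠ 0 → neighbourSum f x = (2 * d + lam) * f x)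
    (x : Zd d) : |f x| ≤ B * (2 * d / (2 * d + lam)) ^ l1Norm x := by
  have hpos : 0 < 2 * (d : ℝ) + lam := by positivity
  suffices ∀ n x, n ≤ l1Norm x → |f x| ≤ B * (2 * d / (2 * d + lam)) ^ n from
    this _ x le_rfl
  intro n
  induction n with
  | zero => simpa using hB
  | succ n ih =>
    intro x hx
    have hx0 : x ≠ 0 := by
      rintro rfl
      simp [l1Norm] at hx
    have hnbr := abs_neighbourSum_le (f := f) (x := x) fun i a ha =>
      ih _ (by have := l1Norm_le_l1Norm_update_add x i a; omega)
    rw [hf x hx0, abs_mul, abs_of_pos hpos, ← le_div_iff₀' hpos] at hnbr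
    calc |f x| ≤ 2 * d * (B * (2 * d / (2 * d + lam)) ^ n) / (2 * d + lam) := hnbr
      _ = B * (2 * d / (2 * d + lam)) ^ (n + 1) := by
        rw [pow_succ]
        ring

lemma summable_prod_pi_of_nonneg {α : Type*} {f : α → ℝ} (hf0 : ∀ a, 0 ≤ f a)
    (hf : Summable f) : ∀ d : ℕ, Summable fun x : Fin d → α => ∏ i, f (x i)
  | 0 => Summable.of_finite
  | d + 1 => by
    have hprod := hf.mul_of_nonneg (summable_prod_pi_of_nonneg hf0 hf d) hf0
      fun x => Finset.prod_nonneg fun i _ => hf0 (x i)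
    refine (Fin.consEquiv fun _ => α).summable_iff.mp ?_
    simpa [Function.comp_def, Fin.prod_univ_succ] using hprod

lemma summable_pow_l1Norm (d : ℕ) {t : ℝ} (ht0 : 0 ≤ t) (ht1 : t < 1) :
    Summable fun x : Zd d => t ^ l1Norm x := by
  have hZ : Summable fun m : ℤ => t ^ m.natAbs := by
    apply Summable.of_nat_of_neg <;> simpa using summable_geometric_of_lt_one ht0 ht1
  simpa [l1Norm, Finset.prod_pow_eq_pow_sum] using
    summable_prod_pi_of_nonneg (fun m => pow_nonneg ht0 _) hZ d

lemma summable_cast_pow_mul_pow_l1Norm (d k : ℕ) {r : ℝ} (hr0 : 0 ≤ r) (hr1 : r < 1) :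
    Summable fun x : Zd d => (l1Norm x : ℝ) ^ k * r ^ l1Norm x := by
  have hs0 : 0 ≤ √r := sqrt_nonneg r
  have hs1 : √r < 1 := (sqrt_lt' one_pos).2 (by simpa using hr1)
  obtain ⟨C, hC⟩ := (tendsto_pow_const_mul_const_pow_of_abs_lt_one k
    (by rwa [abs_of_nonneg hs0])).bddAbove_range
  refine .of_nonneg_of_le (fun x => by positivity) (fun x => ?_)
    ((summable_pow_l1Norm d hs0 hs1).mul_left C)
  calc (l1Norm x : ℝ) ^ k * r ^ l1Norm x
      = ((l1Norm x : ℝ) ^ k * √r ^ l1Norm x) * √r ^ l1Norm x := by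
        rw [mul_assoc, ← mul_pow, mul_self_sqrt hr0]
    _ ≤ C * √r ^ l1Norm x := by
        gcongr
        exact hC ⟨l1Norm x, rfl⟩

theorem supercritical_moments_general (d : ℕ) (β : ℝ) (lam0 : ℝ) (hlam0 : 0 < lam0) :
    ∀ k : ℕ, Summable (fun x : Zd d => latNorm d x ^ k * psiFun d β lam0 x ^ 2) := by
  intro k
  set r : ℝ := 2 * d / (2 * d + lam0)
  have hr0 : 0 ≤ r := by positivity
  have hr1 : r < 1 := (div_lt_one (by positivity)).2 (by linarith)
  have hdecay : ∀ x, |psiFun d β lam0 x| ≤ |β| / lam0 * r ^ l1Norm x :=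
    abs_le_mul_pow_l1Norm hlam0 (abs_psiFun_le β hlam0) fun _ => neighbourSum_psiFun β hlam0
  have hsummable := (summable_cast_pow_mul_pow_l1Norm d k (sq_nonneg r)
    (by nlinarith)).mul_left ((|β| / lam0) ^ 2)
  refine hsummable.of_nonneg_of_le
    (fun x => mul_nonneg (pow_nonneg (sqrt_nonneg _) k) (sq_nonneg _)) fun x => ?_
  calc latNorm d x ^ k * psiFun d β lam0 x ^ 2
      ≤ (l1Norm x : ℝ) ^ k * (|β| / lam0 * r ^ l1Norm x) ^ 2 :=
        mul_le_mul (pow_le_pow_left₀ (sqrt_nonneg _) (latNorm_le_l1Norm x) k)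
          (sq_le_sq' (neg_le_of_abs_le (hdecay x)) (le_of_abs_le (hdecay x)))
          (sq_nonneg _) (by positivity)
    _ = (|β| / lam0) ^ 2 * ((l1Norm x : ℝ) ^ k * (r ^ 2) ^ l1Norm x) := by
        rw [← pow_mul, pow_mul']
        ring

/-- for `d ≥ 1` and `β > β_d = 1/I(0)` (interpreted as `β·I(0) > 1`, which for
`d = 1, 2` where `I(0) = ∞` just means `β > 0`), with `λ₀ > 0` the unique solution of
`I(λ₀) = 1/β` and `ψ_β(x) = β (2π)^{-d} ∫ cos⟨φ,x⟩/(λ₀ + Φ(φ)) dφ`, every moment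
`∑_x ‖x‖^k ψ_β(x)²` is finite; i.e. `π_β` has finite moments of all orders. -/
theorem supercritical_moments (d : ℕ) (hd : 1 ≤ d) (β : ℝ) (hβ : 0 ≤ β)
    (hsup : 1 < ENNReal.ofReal β * IE d 0)
    (lam0 : ℝ) (hlam0 : 0 < lam0) (hroot : Ir d lam0 = 1 / β) :
    ∀ k : ℕ, Summable (fun x : Zd d => latNorm d x ^ k * psiFun d β lam0 x ^ 2) :=
  supercritical_moments_general d β lam0 hlam0
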